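/- Let X be a nonempty bounded complete p-uniformly convex metric space with parameter k > 0 and let (x_n) be a sequence in X. Then (x_n) has a Δ-convergent subsequence: there exist a subsequence (u_n) of (x_n) and a point x ∈ X such that for every subsequence (v_n) of (u_n), x is the unique point of X minimizing the function v ↦ limsup_{n → ∞} d(v, v_n) over X. -/

import Mathlib

/-!
Write `r_u(v) = limsup d(v, u n)` and `R(u) = inf_v r_u(v)`. Passing the uniform convexity
inequality to the limsup at a midpoint of `x` and `y` gives
`(k/8) d(x,y)^p ≤ (r_u(x)^p + r_u(y)^p)/2 - R(u)^p`, so minimizing sequences of `r_u` are Cauchy and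
every sequence has a unique asymptotic center. Since `R` can only drop when passing to a
subsequence and ignores finitely many terms, a diagonal argument over nested subsequences, each
nearly minimizing `R` among the subsequences of the previous one, produces a subsequence `u` with
`R(u ∘ ψ) = R(u)` for every further subsequence `ψ`.
Its center `x` then satisfies `r_{u∘ψ}(x) ≤ r_u(x) = R(u) = R(u ∘ ψ)`, so it is the center of every
`u ∘ ψ`.
-/

open Filter Topology Metric Set Bornology

section RealLimsup

variable {ι : Type*} {l : Filter ι} [l.NeBot] {f : ι → ℝ}

theorem limsup_rpow_of_nonneg (hf₀ : ∀ i, 0 ≤ f i) (hf : l.IsBoundedUnder (· ≤ ·) f)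
    {p : ℝ} (hp : 0 ≤ p) : limsup f l ^ p = limsup (fun i => f i ^ p) l := by
  have hmono : Monotone fun t : ℝ => max t 0 ^ p := fun s t hst =>
    Real.rpow_le_rpow (le_max_right _ _) (max_le_max hst le_rfl) hp
  have hcont : ContinuousAt (fun t : ℝ => max t 0 ^ p) (limsup f l) :=
    ((continuous_id.max continuous_const).rpow_const fun _ => Or.inr hp).continuousAt
  have hL : 0 ≤ limsup f l := le_limsup_of_frequently_le (.of_forall hf₀) hf
  have h := hmono.map_limsup_of_continuousAt f hcont hf (isCoboundedUnder_le_of_le l hf₀)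
  simpa [Function.comp_def, max_eq_left hL, hf₀] using h

theorem limsup_const_mul_of_nonneg {c : ℝ} (hc : 0 ≤ c) (hf : l.IsBoundedUnder (· ≤ ·) f)
    (hf' : l.IsCoboundedUnder (· ≤ ·) f) : limsup (fun i => c * f i) l = c * limsup f l :=
  ((monotone_mul_left_of_nonneg hc).map_limsup_of_continuousAt f
    (continuous_const_mul c).continuousAt hf hf').symm

end RealLimsup

def HasMidpoints (X : Type*) [PseudoMetricSpace X] : Prop :=
  ∀ x y : X, ∃ m : X, dist x m = dist x y / 2 ∧ dist m y = dist x y / 2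

def IsPUniformlyConvex (p k : ℝ) (X : Type*) [PseudoMetricSpace X] : Prop :=
  ∀ x y z m : X, dist x m = dist x y / 2 → dist m y = dist x y / 2 →
    dist z m ^ p ≤ (1 / 2) * dist z x ^ p + (1 / 2) * dist z y ^ p - (k / 8) * dist x y ^ p

section AsymptoticCenter

variable {X : Type*} [PseudoMetricSpace X]

noncomputable def limsupDist (u : ℕ → X) (v : X) : ℝ :=
  limsup (fun n => dist v (u n)) atTop

noncomputable def asymptoticRadius (u : ℕ → X) : ℝ :=
  ⨅ v, limsupDist u v

def IsAsymptoticCenter (u : ℕ → X) (x : X) : Prop :=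
  ∀ v, limsupDist u x ≤ limsupDist u v

theorem isCoboundedUnder_dist (v : X) (u : ℕ → X) :
    atTop.IsCoboundedUnder (· ≤ ·) fun n => dist v (u n) :=
  isCoboundedUnder_le_of_le atTop fun _ => dist_nonneg

theorem limsupDist_comp_add (u : ℕ → X) (N : ℕ) (v : X) :
    limsupDist (u ∘ (· + N)) v = limsupDist u v :=
  limsup_nat_add (fun n => dist v (u n)) N

theorem asymptoticRadius_comp_add (u : ℕ → X) (N : ℕ) :
    asymptoticRadius (u ∘ (· + N)) = asymptoticRadius u := by
  simp only [asymptoticRadius, limsupDist_comp_add]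

variable [BoundedSpace X]

theorem dist_le_diam_univ (x y : X) : dist x y ≤ diam (univ : Set X) :=
  dist_le_diam_of_mem (isBounded_univ.2 ‹_›) (mem_univ x) (mem_univ y)

theorem isBoundedUnder_dist (v : X) (u : ℕ → X) :
    atTop.IsBoundedUnder (· ≤ ·) fun n => dist v (u n) :=
  isBoundedUnder_of ⟨_, fun n => dist_le_diam_univ v (u n)⟩

theorem limsupDist_nonneg (u : ℕ → X) (v : X) : 0 ≤ limsupDist u v :=
  le_limsup_of_frequently_le (.of_forall fun _ => dist_nonneg) (isBoundedUnder_dist v u)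

theorem limsupDist_le_add_dist (u : ℕ → X) (v w : X) :
    limsupDist u v ≤ limsupDist u w + dist v w :=
  calc limsupDist u v ≤ limsup (fun n => dist w (u n) + dist v w) atTop :=
        limsup_le_limsup (.of_forall fun n => (dist_triangle v w (u n)).trans_eq (add_comm _ _))
          (isCoboundedUnder_dist v u) (isBoundedUnder_le_add (isBoundedUnder_dist w u)
            isBoundedUnder_const)
    _ = limsupDist u w + dist v w :=
        limsup_add_const _ _ _ (isBoundedUnder_dist w u) (isCoboundedUnder_dist w u)

theorem limsupDist_comp_le {θ : ℕ → ℕ} (hθ : Tendsto θ atTop atTop) (u : ℕ → X) (v : X) :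
    limsupDist (u ∘ θ) v ≤ limsupDist u v :=
  hθ.limsup_comp_le_limsup (u := fun n => dist v (u n))
    (isCoboundedUnder_le_of_le _ fun _ => dist_nonneg) (isBoundedUnder_dist v u)

theorem limsupDist_rpow_le_of_midpoint {p k : ℝ} (hp : 0 ≤ p) (huc : IsPUniformlyConvex p k X)
    (u : ℕ → X) {x y m : X} (hxm : dist x m = dist x y / 2) (hmy : dist m y = dist x y / 2) :
    limsupDist u m ^ p ≤
      (1 / 2) * limsupDist u x ^ p + (1 / 2) * limsupDist u y ^ p - (k / 8) * dist x y ^ p := by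
  set c := (k / 8) * dist x y ^ p
  set D := diam (univ : Set X) ^ p
  have hD (z : X) (n : ℕ) : dist z (u n) ^ p ≤ D :=
    Real.rpow_le_rpow dist_nonneg (dist_le_diam_univ z (u n)) hp
  have hpos (z : X) (n : ℕ) : 0 ≤ dist z (u n) ^ p := by positivity
  have hbdd (z : X) : atTop.IsBoundedUnder (· ≤ ·) fun n => (1 / 2) * dist z (u n) ^ p :=
    isBoundedUnder_of ⟨D, fun n => by linarith [hD z n, hpos z n]⟩
  have hcobdd (z : X) : atTop.IsCoboundedUnder (· ≤ ·) fun n => (1 / 2) * dist z (u n) ^ p :=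
    isCoboundedUnder_le_of_le (x := 0) _ fun n => by positivity
  have hlimsup (z : X) :
      limsup (fun n => (1 / 2) * dist z (u n) ^ p) atTop = (1 / 2) * limsupDist u z ^ p := by
    rw [limsup_const_mul_of_nonneg (by norm_num) (isBoundedUnder_of ⟨D, hD z⟩)
      (isCoboundedUnder_le_of_le _ (hpos z)), limsupDist,
      limsup_rpow_of_nonneg (fun _ => dist_nonneg) (isBoundedUnder_dist z u) hp]
  have hsum_bdd := isBoundedUnder_le_add (hbdd x) (hbdd y)
  have hsum_cobdd : atTop.IsCoboundedUnder (· ≤ ·)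
      fun n => (1 / 2) * dist x (u n) ^ p + (1 / 2) * dist y (u n) ^ p :=
    isCoboundedUnder_le_of_le (x := 0) _ fun n => by positivity
  calc limsupDist u m ^ p = limsup (fun n => dist m (u n) ^ p) atTop :=
        limsup_rpow_of_nonneg (fun _ => dist_nonneg) (isBoundedUnder_dist m u) hp
    _ ≤ limsup (fun n => (1 / 2) * dist x (u n) ^ p + (1 / 2) * dist y (u n) ^ p - c) atTop := by
        refine limsup_le_limsup (.of_forall fun n => ?_) (isCoboundedUnder_le_of_le _ (hpos m))
          (isBoundedUnder_le_add hsum_bdd isBoundedUnder_const)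
        simpa only [dist_comm (u n)] using huc x y (u n) m hxm hmy
    _ = limsup (fun n => (1 / 2) * dist x (u n) ^ p + (1 / 2) * dist y (u n) ^ p) atTop - c :=
        limsup_sub_const _ _ _ hsum_bdd hsum_cobdd
    _ ≤ (1 / 2) * limsupDist u x ^ p + (1 / 2) * limsupDist u y ^ p - c := by
        rw [← hlimsup x, ← hlimsup y]
        exact sub_le_sub_right (limsup_add_le (isBoundedUnder_of ⟨0, fun n => by positivity⟩)
          (hbdd x) (hcobdd y) (hbdd y)) c

theorem asymptoticRadius_le_limsupDist (u : ℕ → X) (v : X) :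
    asymptoticRadius u ≤ limsupDist u v :=
  ciInf_le ⟨0, forall_mem_range.2 (limsupDist_nonneg u)⟩ v

theorem asymptoticRadius_nonneg (u : ℕ → X) : 0 ≤ asymptoticRadius u :=
  Real.iInf_nonneg (limsupDist_nonneg u)

theorem asymptoticRadius_comp_le {θ : ℕ → ℕ} (hθ : Tendsto θ atTop atTop) (u : ℕ → X) :
    asymptoticRadius (u ∘ θ) ≤ asymptoticRadius u :=
  have : Nonempty X := ⟨u 0⟩
  le_ciInf fun v => (asymptoticRadius_le_limsupDist _ v).trans (limsupDist_comp_le hθ u v)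

theorem IsAsymptoticCenter.limsupDist_eq {u : ℕ → X} {x : X} (hx : IsAsymptoticCenter u x) :
    limsupDist u x = asymptoticRadius u :=
  have : Nonempty X := ⟨x⟩
  le_antisymm (le_ciInf hx) (asymptoticRadius_le_limsupDist u x)

theorem IsAsymptoticCenter.comp {u : ℕ → X} {x : X} (hx : IsAsymptoticCenter u x) {θ : ℕ → ℕ}
    (hθ : Tendsto θ atTop atTop) (hr : asymptoticRadius (u ∘ θ) = asymptoticRadius u) :
    IsAsymptoticCenter (u ∘ θ) x := fun v =>
  calc limsupDist (u ∘ θ) x ≤ limsupDist u x := limsupDist_comp_le hθ u x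
    _ = asymptoticRadius (u ∘ θ) := hx.limsupDist_eq.trans hr.symm
    _ ≤ limsupDist (u ∘ θ) v := asymptoticRadius_le_limsupDist _ v

theorem mul_dist_rpow_le_sub_asymptoticRadius {p k : ℝ} (hp : 0 ≤ p)
    (huc : IsPUniformlyConvex p k X) (hmid : HasMidpoints X) (u : ℕ → X) (x y : X) :
    (k / 8) * dist x y ^ p ≤
      (1 / 2) * limsupDist u x ^ p + (1 / 2) * limsupDist u y ^ p - asymptoticRadius u ^ p := by
  obtain ⟨m, hxm, hmy⟩ := hmid x y
  have hm := limsupDist_rpow_le_of_midpoint hp huc u hxm hmy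
  have hRm : asymptoticRadius u ^ p ≤ limsupDist u m ^ p :=
    Real.rpow_le_rpow (asymptoticRadius_nonneg u) (asymptoticRadius_le_limsupDist u m) hp
  linarith

theorem cauchySeq_of_tendsto_asymptoticRadius {p k : ℝ} (hp : 0 < p) (hk : 0 < k)
    (huc : IsPUniformlyConvex p k X) (hmid : HasMidpoints X) (u : ℕ → X) {y : ℕ → X}
    (hy : Tendsto (fun j => limsupDist u (y j)) atTop (𝓝 (asymptoticRadius u))) :
    CauchySeq y := by
  have hyp := hy.rpow_const (p := p) (Or.inr hp.le)
  rw [Metric.cauchySeq_iff]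
  intro ε hε
  have hδ : 0 < (k / 8) * ε ^ p := by positivity
  obtain ⟨N, hN⟩ := eventually_atTop.1 (hyp.eventually (gt_mem_nhds (lt_add_of_pos_right _ hδ)))
  refine ⟨N, fun i hi j hj => ?_⟩
  have hij := mul_dist_rpow_le_sub_asymptoticRadius hp.le huc hmid u (y i) (y j)
  have hlt : (k / 8) * dist (y i) (y j) ^ p < (k / 8) * ε ^ p := by
    linarith [hN i hi, hN j hj]
  exact (Real.rpow_lt_rpow_iff dist_nonneg hε.le hp).1 (lt_of_mul_lt_mul_left hlt (by positivity))

theorem exists_isAsymptoticCenter [CompleteSpace X] {p k : ℝ} (hp : 0 < p) (hk : 0 < k)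
    (huc : IsPUniformlyConvex p k X) (hmid : HasMidpoints X) (u : ℕ → X) :
    ∃ x, IsAsymptoticCenter u x := by
  have : Nonempty X := ⟨u 0⟩
  obtain ⟨r, -, hr, hr_mem⟩ := exists_seq_tendsto_sInf (range_nonempty (limsupDist u))
    ⟨0, forall_mem_range.2 (limsupDist_nonneg u)⟩
  choose y hy using hr_mem
  have hFy : Tendsto (fun j => limsupDist u (y j)) atTop (𝓝 (asymptoticRadius u)) := by
    rw [funext hy]; exact hr
  obtain ⟨x, hx⟩ := cauchySeq_tendsto_of_complete
    (cauchySeq_of_tendsto_asymptoticRadius hp hk huc hmid u hFy)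
  have hlim : Tendsto (fun j => limsupDist u (y j) + dist x (y j)) atTop
      (𝓝 (asymptoticRadius u)) := by
    simpa using hFy.add ((tendsto_const_nhds (x := x)).dist hx)
  exact ⟨x, fun v => (ge_of_tendsto' hlim fun j => limsupDist_le_add_dist u x (y j)).trans
    (asymptoticRadius_le_limsupDist u v)⟩

end AsymptoticCenter

theorem IsAsymptoticCenter.unique {X : Type*} [MetricSpace X] [BoundedSpace X] {p k : ℝ}
    (hp : 0 < p) (hk : 0 < k) (huc : IsPUniformlyConvex p k X) (hmid : HasMidpoints X)
    {u : ℕ → X} {a b : X} (ha : IsAsymptoticCenter u a) (hb : IsAsymptoticCenter u b) : a = b := by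
  have hab := mul_dist_rpow_le_sub_asymptoticRadius hp.le huc hmid u a b
  rw [ha.limsupDist_eq, hb.limsupDist_eq] at hab
  have hpow : dist a b ^ p = 0 :=
    le_antisymm (nonpos_of_mul_nonpos_right (a := k / 8) (by linarith) (by positivity))
      (by positivity)
  exact dist_eq_zero.1 ((Real.rpow_eq_zero dist_nonneg hp.ne').1 hpow)

section RegularSubsequence

theorem StrictMono.exists_strictMono_eq_comp {g v : ℕ → ℕ} (hg : StrictMono g)
    (hv : StrictMono v) (hvg : ∀ n, v n ∈ range g) : ∃ θ, StrictMono θ ∧ v = g ∘ θ := by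
  choose θ hθ using hvg
  refine ⟨θ, fun a b hab => hg.lt_iff_lt.1 ?_, funext fun n => (hθ n).symm⟩
  rw [hθ a, hθ b]
  exact hv hab

theorem strictMono_diag_of_eq_comp {σ τ : ℕ → ℕ → ℕ} (hσ₀ : StrictMono (σ 0))
    (hτ : ∀ j, StrictMono (τ j)) (hστ : ∀ j, σ (j + 1) = σ j ∘ τ j) :
    (∀ j, StrictMono (σ j)) ∧ StrictMono (fun n => σ n n) ∧
      ∀ j n, j ≤ n → σ n n ∈ range (σ j) := by
  have hσ (j : ℕ) : StrictMono (σ j) := by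
    induction j with
    | zero => exact hσ₀
    | succ j ih => exact hστ j ▸ ih.comp (hτ j)
  have hrange : Antitone fun j => range (σ j) :=
    antitone_nat_of_succ_le fun j => hστ j ▸ range_comp_subset_range _ _
  refine ⟨hσ, strictMono_nat_of_lt_succ fun n => ?_, fun j n hjn => hrange hjn (mem_range_self n)⟩
  calc σ n n < σ n (n + 1) := hσ n n.lt_succ_self
    _ ≤ σ n (τ n (n + 1)) := (hσ n).monotone (hτ n).le_apply
    _ = σ (n + 1) (n + 1) := by rw [hστ]; rfl

variable {α : Type*} {r : (ℕ → α) → ℝ}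

theorem exists_strictMono_forall_le_add (hr : BddBelow (range r)) (u : ℕ → α) {ε : ℝ}
    (hε : 0 < ε) :
    ∃ τ : ℕ → ℕ, StrictMono τ ∧ ∀ θ : ℕ → ℕ, StrictMono θ → r (u ∘ τ) ≤ r (u ∘ θ) + ε := by
  set S := (fun θ => r (u ∘ θ)) '' {θ | StrictMono θ}
  have hS : S.Nonempty := ⟨_, mem_image_of_mem _ strictMono_id⟩
  have hSb : BddBelow S := hr.mono (by rintro _ ⟨θ, -, rfl⟩; exact mem_range_self _)
  obtain ⟨_, ⟨τ, hτ, rfl⟩, hlt⟩ := exists_lt_of_csInf_lt hS (lt_add_of_pos_right (sInf S) hε)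
  refine ⟨τ, hτ, fun θ hθ => hlt.le.trans ?_⟩
  gcongr
  exact csInf_le hSb (mem_image_of_mem _ hθ)

theorem exists_strictMono_forall_comp_eq (hr : BddBelow (range r))
    (hr_comp : ∀ u θ, StrictMono θ → r (u ∘ θ) ≤ r u) (hr_add : ∀ u N, r (u ∘ (· + N)) = r u)
    (u : ℕ → α) :
    ∃ φ : ℕ → ℕ, StrictMono φ ∧ ∀ ψ : ℕ → ℕ, StrictMono ψ → r (u ∘ φ ∘ ψ) = r (u ∘ φ) := by
  choose τ hτ hτr using fun (g : ℕ → ℕ) (j : ℕ) =>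
    exists_strictMono_forall_le_add hr (u ∘ g) (Nat.one_div_pos_of_nat (α := ℝ) (n := j))
  let σ : ℕ → ℕ → ℕ := fun j => Nat.rec id (fun j g => g ∘ τ g j) j
  obtain ⟨hσ, hφ, hφσ⟩ :=
    strictMono_diag_of_eq_comp (σ := σ) strictMono_id (fun j => hτ _ _) fun _ => rfl
  set φ := fun n => σ n n
  refine ⟨φ, hφ, fun ψ hψ => le_antisymm (hr_comp (u ∘ φ) ψ hψ) ?_⟩
  have hle_add (j : ℕ) : r (u ∘ φ) ≤ r (u ∘ φ ∘ ψ) + 1 / (j + 1) := by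
    obtain ⟨θ₁, hθ₁, h₁⟩ := (hσ (j + 1)).exists_strictMono_eq_comp
      (hφ.comp add_left_strictMono)
      fun n => hφσ (j + 1) _ (Nat.le_add_left _ _)
    obtain ⟨θ₂, hθ₂, h₂⟩ := (hσ j).exists_strictMono_eq_comp
      ((hφ.comp hψ).comp add_left_strictMono)
      fun n => hφσ j _ ((Nat.le_add_left _ _).trans hψ.le_apply)
    calc r (u ∘ φ) = r (u ∘ φ ∘ (· + (j + 1))) := (hr_add (u ∘ φ) (j + 1)).symm
      _ = r ((u ∘ σ (j + 1)) ∘ θ₁) := by rw [h₁]; rfl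
      _ ≤ r (u ∘ σ (j + 1)) := hr_comp _ _ hθ₁
      _ ≤ r ((u ∘ σ j) ∘ θ₂) + 1 / (j + 1) := hτr (σ j) j θ₂ hθ₂
      _ = r (u ∘ φ ∘ ψ) + 1 / (j + 1) := by
        rw [← hr_add (u ∘ φ ∘ ψ) j, Function.comp_assoc, ← h₂]
        rfl
  simpa using
    ge_of_tendsto' (tendsto_const_nhds.add tendsto_one_div_add_atTop_nhds_zero_nat) hle_add

end RegularSubsequence

theorem delta_convergent_subsequence_general
    {X : Type*} [MetricSpace X] [CompleteSpace X]
    (hXb : Bornology.IsBounded (Set.univ : Set X))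
    (p k : ℝ) (hp : 1 ≤ p) (hk : 0 < k)
    (geo : ∀ x y : X, ∃ m : X, dist x m = dist x y / 2 ∧ dist m y = dist x y / 2)
    (puc : ∀ x y z m : X,
      dist x m = dist x y / 2 → dist m y = dist x y / 2 →
      dist z m ^ p ≤ (1 / 2) * dist z x ^ p + (1 / 2) * dist z y ^ p
        - (k / 8) * dist x y ^ p)
    (xn : ℕ → X) :
    ∃ φ : ℕ → ℕ, StrictMono φ ∧ ∃ x : X,
      ∀ ψ : ℕ → ℕ, StrictMono ψ →
        (∀ v : X,
          Filter.limsup (fun n => dist x (xn (φ (ψ n)))) Filter.atTop ≤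
            Filter.limsup (fun n => dist v (xn (φ (ψ n)))) Filter.atTop) ∧
        (∀ v : X,
          (∀ w : X,
            Filter.limsup (fun n => dist v (xn (φ (ψ n)))) Filter.atTop ≤
              Filter.limsup (fun n => dist w (xn (φ (ψ n)))) Filter.atTop) →
          v = x) := by
  have : BoundedSpace X := isBounded_univ.1 hXb
  have hp₀ : 0 < p := by linarith
  obtain ⟨φ, hφ, hreg⟩ := exists_strictMono_forall_comp_eq
    ⟨0, forall_mem_range.2 asymptoticRadius_nonneg⟩
    (fun u _ hθ => asymptoticRadius_comp_le hθ.tendsto_atTop u) asymptoticRadius_comp_add xn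
  obtain ⟨x, hx⟩ := exists_isAsymptoticCenter hp₀ hk puc geo (xn ∘ φ)
  refine ⟨φ, hφ, x, fun ψ hψ => ?_⟩
  have hxψ : IsAsymptoticCenter (xn ∘ φ ∘ ψ) x := hx.comp hψ.tendsto_atTop (hreg ψ hψ)
  exact ⟨hxψ, fun v hv => IsAsymptoticCenter.unique hp₀ hk puc geo hv hxψ⟩

/-- In a nonempty bounded complete `p`-uniformly convex space, every sequence has a
`Δ`-convergent subsequence: there are a subsequence `(x ∘ φ)` and a point `x₀` such
that for every further subsequence, `x₀` is the unique minimizer over `X` of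
`v ↦ limsup_n dist v (·)`. -/
theorem delta_convergent_subsequence
    {X : Type*} [MetricSpace X] [Nonempty X] [CompleteSpace X]
    (hXb : Bornology.IsBounded (Set.univ : Set X))
    (p k : ℝ) (hp : 1 ≤ p) (hk : 0 < k)
    (geo : ∀ x y : X, ∃ m : X, dist x m = dist x y / 2 ∧ dist m y = dist x y / 2)
    (puc : ∀ x y z m : X,
      dist x m = dist x y / 2 → dist m y = dist x y / 2 →
      dist z m ^ p ≤ (1 / 2) * dist z x ^ p + (1 / 2) * dist z y ^ p
        - (k / 8) * dist x y ^ p)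
    (xn : ℕ → X) :
    ∃ φ : ℕ → ℕ, StrictMono φ ∧ ∃ x : X,
      ∀ ψ : ℕ → ℕ, StrictMono ψ →
        (∀ v : X,
          Filter.limsup (fun n => dist x (xn (φ (ψ n)))) Filter.atTop ≤
            Filter.limsup (fun n => dist v (xn (φ (ψ n)))) Filter.atTop) ∧
        (∀ v : X,
          (∀ w : X,
            Filter.limsup (fun n => dist v (xn (φ (ψ n)))) Filter.atTop ≤
              Filter.limsup (fun n => dist w (xn (φ (ψ n)))) Filter.atTop) →
          v = x) :=
  delta_convergent_subsequence_general hXb p k hp hk geo puc xn
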